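/- Let q ∈ ℝ with q ∉ {0, 1, −1}. The assignments a ↦ d, b ↦ −qc, c ↦ −q⁻¹b, d ↦ a, θ⁰ ↦ −θ⁰, θ¹ ↦ −θ², θ² ↦ −θ¹ extend to a well-defined conjugate-linear anti-homomorphism * : M_q^I → M_q^II (i.e., (xy)* = y* x* and (λx)* = λ̄ x* for λ ∈ ℂ), and the map M_q^II → M_q^I defined by the same assignments is its two-sided inverse; in particular * is bijective. Thus the *-involution interchanges the type-I and type-II quantum algebras. -/

import Mathlib

open scoped TensorProduct

noncomputable section
set_option synthInstance.maxHeartbeats 1000000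
set_option maxHeartbeats 1000000

/-- The free ℂ-algebra on the generators `a, b, c, d, θ⁰, θ¹, θ²`. -/
abbrev F7 : Type := FreeAlgebra ℂ (Fin 7)

/-- The generators: `a = g 0`, `b = g 1`, `c = g 2`, `d = g 3`, `θ⁰ = g 4`, `θ¹ = g 5`,
`θ² = g 6`. -/
def g (i : Fin 7) : F7 := FreeAlgebra.ι ℂ i

/-- The defining relations of the quantum algebra (type I). -/
inductive RelI (q : ℂ) : F7 → F7 → Prop
  | rel_ab : RelI q (g 0 * g 1) (q • (g 1 * g 0))
  | rel_ac : RelI q (g 0 * g 2) (q • (g 2 * g 0))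
  | rel_bc : RelI q (g 1 * g 2) (g 2 * g 1)
  | rel_bd : RelI q (g 1 * g 3) (q • (g 3 * g 1))
  | rel_cd : RelI q (g 2 * g 3) (q • (g 3 * g 2))
  | rel_adda : RelI q (g 0 * g 3 - g 3 * g 0) ((q - q⁻¹) • (g 1 * g 2))
  | rel_det : RelI q (g 0 * g 3 - q • (g 1 * g 2)) 1
  | rel_t0a : RelI q (g 4 * g 0) (g 0 * g 4 + (q ^ 2 * (q - q⁻¹)) • (g 2 * g 5))
  | rel_t1a : RelI q (g 5 * g 0) (q⁻¹ • (g 0 * g 5))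
  | rel_t2a : RelI q (g 6 * g 0) (q • (g 0 * g 6) - ((q - q⁻¹) * (q + q⁻¹)) • (g 2 * g 4))
  | rel_t0b : RelI q (g 4 * g 1) (g 1 * g 4 + (q ^ 2 * (q - q⁻¹)) • (g 3 * g 5))
  | rel_t1b : RelI q (g 5 * g 1) (q⁻¹ • (g 1 * g 5))
  | rel_t2b : RelI q (g 6 * g 1) (q • (g 1 * g 6) - ((q - q⁻¹) * (q + q⁻¹)) • (g 3 * g 4))
  | rel_t0c : RelI q (g 4 * g 2) (g 2 * g 4)
  | rel_t1c : RelI q (g 5 * g 2) (q • (g 2 * g 5))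
  | rel_t2c : RelI q (g 6 * g 2) (q⁻¹ • (g 2 * g 6))
  | rel_t0d : RelI q (g 4 * g 3) (g 3 * g 4)
  | rel_t1d : RelI q (g 5 * g 3) (q • (g 3 * g 5))
  | rel_t2d : RelI q (g 6 * g 3) (q⁻¹ • (g 3 * g 6))
  | rel_th00 : RelI q (g 4 * g 4) ((q ^ 2 * (q - q⁻¹) / (q + q⁻¹)) • (g 5 * g 6))
  | rel_th11 : RelI q (g 5 * g 5) 0
  | rel_th22 : RelI q (g 6 * g 6) 0
  | rel_th12 : RelI q (g 5 * g 6) (-(g 6 * g 5))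
  | rel_th10 : RelI q (g 5 * g 4) ((-(q ^ 2)⁻¹) • (g 4 * g 5))
  | rel_th20 : RelI q (g 6 * g 4) ((-(q ^ 2)) • (g 4 * g 6))

/-- The type-I quantum algebra. -/
abbrev MqI (q : ℂ) : Type := RingQuot (RelI q)

def mkI (q : ℂ) : F7 →ₐ[ℂ] MqI q := RingQuot.mkAlgHom ℂ (RelI q)

def aI (q : ℂ) : MqI q := mkI q (g 0)
def bI (q : ℂ) : MqI q := mkI q (g 1)
def cI (q : ℂ) : MqI q := mkI q (g 2)
def dI (q : ℂ) : MqI q := mkI q (g 3)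
def t0I (q : ℂ) : MqI q := mkI q (g 4)
def t1I (q : ℂ) : MqI q := mkI q (g 5)
def t2I (q : ℂ) : MqI q := mkI q (g 6)

/-- The defining relations of the quantum algebra (type II). -/
inductive RelII (q : ℂ) : F7 → F7 → Prop
  | rel_ab : RelII q (g 0 * g 1) (q • (g 1 * g 0))
  | rel_ac : RelII q (g 0 * g 2) (q • (g 2 * g 0))
  | rel_bc : RelII q (g 1 * g 2) (g 2 * g 1)
  | rel_bd : RelII q (g 1 * g 3) (q • (g 3 * g 1))
  | rel_cd : RelII q (g 2 * g 3) (q • (g 3 * g 2))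
  | rel_adda : RelII q (g 0 * g 3 - g 3 * g 0) ((q - q⁻¹) • (g 1 * g 2))
  | rel_det : RelII q (g 0 * g 3 - q • (g 1 * g 2)) 1
  | rel_t0a : RelII q (g 4 * g 0) (g 0 * g 4)
  | rel_t1a : RelII q (g 5 * g 0) (q • (g 0 * g 5))
  | rel_t2a : RelII q (g 6 * g 0) (q⁻¹ • (g 0 * g 6))
  | rel_t0b : RelII q (g 4 * g 1) (g 1 * g 4)
  | rel_t1b : RelII q (g 5 * g 1) (q • (g 1 * g 5))
  | rel_t2b : RelII q (g 6 * g 1) (q⁻¹ • (g 1 * g 6))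
  | rel_t0c : RelII q (g 4 * g 2) (g 2 * g 4 + (q - q⁻¹) • (g 0 * g 6))
  | rel_t1c : RelII q (g 5 * g 2) (q⁻¹ • (g 2 * g 5) - ((q - q⁻¹) * (q + q⁻¹) / q ^ 2) • (g 0 * g 4))
  | rel_t2c : RelII q (g 6 * g 2) (q • (g 2 * g 6))
  | rel_t0d : RelII q (g 4 * g 3) (g 3 * g 4 + (q - q⁻¹) • (g 1 * g 6))
  | rel_t1d : RelII q (g 5 * g 3) (q⁻¹ • (g 3 * g 5) - ((q - q⁻¹) * (q + q⁻¹) / q ^ 2) • (g 1 * g 4))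
  | rel_t2d : RelII q (g 6 * g 3) (q • (g 3 * g 6))
  | rel_th00 : RelII q (g 4 * g 4) ((q ^ 2 * (q - q⁻¹) / (q + q⁻¹)) • (g 5 * g 6))
  | rel_th11 : RelII q (g 5 * g 5) 0
  | rel_th22 : RelII q (g 6 * g 6) 0
  | rel_th12 : RelII q (g 5 * g 6) (-(g 6 * g 5))
  | rel_th10 : RelII q (g 5 * g 4) ((-(q ^ 2)⁻¹) • (g 4 * g 5))
  | rel_th20 : RelII q (g 6 * g 4) ((-(q ^ 2)) • (g 4 * g 6))

/-- The type-II quantum algebra. -/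
abbrev MqII (q : ℂ) : Type := RingQuot (RelII q)

def mkII (q : ℂ) : F7 →ₐ[ℂ] MqII q := RingQuot.mkAlgHom ℂ (RelII q)

def aII (q : ℂ) : MqII q := mkII q (g 0)
def bII (q : ℂ) : MqII q := mkII q (g 1)
def cII (q : ℂ) : MqII q := mkII q (g 2)
def dII (q : ℂ) : MqII q := mkII q (g 3)
def t0II (q : ℂ) : MqII q := mkII q (g 4)
def t1II (q : ℂ) : MqII q := mkII q (g 5)
def t2II (q : ℂ) : MqII q := mkII q (g 6)

/-!
A conjugate-linear anti-homomorphism `A → B` of complex algebras is the same thing as a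
`ℂ`-algebra homomorphism from `A` into `Bᵐᵒᵖ` with scalars acting through complex conjugation.
So `*` exists as soon as the proposed images of the generators satisfy the type-I relations in
(this twisted opposite of) `M_q^II`, and symmetrically for the map back. Each relation is checked
by bringing both sides to a normal ordering with the relations of the target; since `q` is real,
conjugation fixes all the coefficients. The two composites are `ℂ`-algebra endomorphisms fixing
the generators (e.g. `b ↦ -q c ↦ (-q)(-q⁻¹) b = b`), hence identities.
-/

/-- `Aᵐᵒᵖ` with `R` acting through `star`: `R`-algebra maps into `ConjOpposite R A` are the
conjugate-linear anti-homomorphisms into `A`. -/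
def ConjOpposite (_R A : Type*) : Type _ := Aᵐᵒᵖ

namespace ConjOpposite

variable {R A B : Type*}

instance [Semiring A] : Semiring (ConjOpposite R A) := inferInstanceAs (Semiring Aᵐᵒᵖ)

instance [Ring A] : Ring (ConjOpposite R A) := inferInstanceAs (Ring Aᵐᵒᵖ)

instance [CommSemiring R] [StarRing R] [Semiring A] [Algebra R A] :
    Algebra R (ConjOpposite R A) :=
  (Algebra.compHom Aᵐᵒᵖ (starRingEnd R) : Algebra R Aᵐᵒᵖ)

def op (x : A) : ConjOpposite R A := MulOpposite.op x

def unop (x : ConjOpposite R A) : A := MulOpposite.unop x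

@[simp] lemma unop_op (x : A) : unop (op x : ConjOpposite R A) = x := rfl

lemma unop_injective : Function.Injective (unop : ConjOpposite R A → A) :=
  MulOpposite.unop_injective

section Semiring

variable [Semiring A]

@[simp] lemma unop_zero : unop (0 : ConjOpposite R A) = 0 := rfl

@[simp] lemma unop_one : unop (1 : ConjOpposite R A) = 1 := rfl

@[simp] lemma unop_add (x y : ConjOpposite R A) : unop (x + y) = unop x + unop y := rfl

@[simp] lemma unop_mul (x y : ConjOpposite R A) : unop (x * y) = unop y * unop x := rfl

variable [CommSemiring R] [StarRing R] [Algebra R A]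

@[simp] lemma unop_algebraMap (r : R) :
    unop (algebraMap R (ConjOpposite R A) r) = algebraMap R A (star r) := rfl

@[simp] lemma unop_smul (r : R) (x : ConjOpposite R A) : unop (r • x) = star r • unop x := by
  rw [Algebra.smul_def, unop_mul, unop_algebraMap, ← Algebra.commutes, ← Algebra.smul_def]

end Semiring

section Ring

variable [Ring A]

@[simp] lemma unop_neg (x : ConjOpposite R A) : unop (-x) = -unop x := rfl

@[simp] lemma unop_sub (x y : ConjOpposite R A) : unop (x - y) = unop x - unop y := rfl

end Ring

variable [CommSemiring R] [StarRing R] [Semiring A] [Algebra R A] [Semiring B] [Algebra R B]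

def comp (g : B →ₐ[R] ConjOpposite R A) (f : A →ₐ[R] ConjOpposite R B) : A →ₐ[R] A where
  toFun x := unop (g (unop (f x)))
  map_one' := by simp
  map_mul' x y := by simp
  map_zero' := by simp
  map_add' x y := by simp
  commutes' r := by simp

lemma comp_apply (g : B →ₐ[R] ConjOpposite R A) (f : A →ₐ[R] ConjOpposite R B) (x : A) :
    comp g f x = unop (g (unop (f x))) := rfl

end ConjOpposite

namespace RingQuot

variable {S A : Type*} [CommRing S] [Ring A] [Algebra S A] {r : A → A → Prop}

/- `-x` and `x - y` on a `RingQuot` elaborate to its own `Neg` and `Sub` instances, which `simp` and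
`rw` do not identify with those of its `Ring` instance, so `neg_mul`, `sub_mul`, ... do not fire on
them; these two lemmas turn them into scalar multiples instead. -/

lemma neg_eq_neg_one_smul (x : RingQuot r) : -x = (-1 : S) • x := (neg_one_smul S x).symm

lemma sub_eq_add_neg_one_smul (x y : RingQuot r) : x - y = x + (-1 : S) • y :=
  (sub_eq_add_neg x y).trans (congrArg (x + ·) (neg_one_smul S y).symm)

end RingQuot

section RelationsI

variable {q : ℂ}

attribute [local simp] mkI aI bI cI dI t0I t1I t2I

lemma aI_mul_bI : aI q * bI q = q • (bI q * aI q) := by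
  simpa using RingQuot.mkAlgHom_rel ℂ (RelI.rel_ab (q := q))

lemma aI_mul_cI : aI q * cI q = q • (cI q * aI q) := by
  simpa using RingQuot.mkAlgHom_rel ℂ (RelI.rel_ac (q := q))

lemma bI_mul_cI : bI q * cI q = cI q * bI q := by
  simpa using RingQuot.mkAlgHom_rel ℂ (RelI.rel_bc (q := q))

lemma bI_mul_dI : bI q * dI q = q • (dI q * bI q) := by
  simpa using RingQuot.mkAlgHom_rel ℂ (RelI.rel_bd (q := q))

lemma cI_mul_dI : cI q * dI q = q • (dI q * cI q) := by
  simpa using RingQuot.mkAlgHom_rel ℂ (RelI.rel_cd (q := q))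

lemma t0I_mul_aI : t0I q * aI q = aI q * t0I q + (q ^ 2 * (q - q⁻¹)) • (cI q * t1I q) := by
  simpa using RingQuot.mkAlgHom_rel ℂ (RelI.rel_t0a (q := q))

lemma t1I_mul_aI : t1I q * aI q = q⁻¹ • (aI q * t1I q) := by
  simpa using RingQuot.mkAlgHom_rel ℂ (RelI.rel_t1a (q := q))

lemma t2I_mul_aI :
    t2I q * aI q = q • (aI q * t2I q) - ((q - q⁻¹) * (q + q⁻¹)) • (cI q * t0I q) := by
  simpa using RingQuot.mkAlgHom_rel ℂ (RelI.rel_t2a (q := q))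

lemma t0I_mul_bI : t0I q * bI q = bI q * t0I q + (q ^ 2 * (q - q⁻¹)) • (dI q * t1I q) := by
  simpa using RingQuot.mkAlgHom_rel ℂ (RelI.rel_t0b (q := q))

lemma t1I_mul_bI : t1I q * bI q = q⁻¹ • (bI q * t1I q) := by
  simpa using RingQuot.mkAlgHom_rel ℂ (RelI.rel_t1b (q := q))

lemma t2I_mul_bI :
    t2I q * bI q = q • (bI q * t2I q) - ((q - q⁻¹) * (q + q⁻¹)) • (dI q * t0I q) := by
  simpa using RingQuot.mkAlgHom_rel ℂ (RelI.rel_t2b (q := q))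

lemma t0I_mul_cI : t0I q * cI q = cI q * t0I q := by
  simpa using RingQuot.mkAlgHom_rel ℂ (RelI.rel_t0c (q := q))

lemma t1I_mul_cI : t1I q * cI q = q • (cI q * t1I q) := by
  simpa using RingQuot.mkAlgHom_rel ℂ (RelI.rel_t1c (q := q))

lemma t2I_mul_cI : t2I q * cI q = q⁻¹ • (cI q * t2I q) := by
  simpa using RingQuot.mkAlgHom_rel ℂ (RelI.rel_t2c (q := q))

lemma t0I_mul_dI : t0I q * dI q = dI q * t0I q := by
  simpa using RingQuot.mkAlgHom_rel ℂ (RelI.rel_t0d (q := q))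

lemma t1I_mul_dI : t1I q * dI q = q • (dI q * t1I q) := by
  simpa using RingQuot.mkAlgHom_rel ℂ (RelI.rel_t1d (q := q))

lemma t2I_mul_dI : t2I q * dI q = q⁻¹ • (dI q * t2I q) := by
  simpa using RingQuot.mkAlgHom_rel ℂ (RelI.rel_t2d (q := q))

lemma t0I_mul_t0I : t0I q * t0I q = (q ^ 2 * (q - q⁻¹) / (q + q⁻¹)) • (t1I q * t2I q) := by
  simpa using RingQuot.mkAlgHom_rel ℂ (RelI.rel_th00 (q := q))

lemma t1I_mul_t1I : t1I q * t1I q = 0 := by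
  simpa using RingQuot.mkAlgHom_rel ℂ (RelI.rel_th11 (q := q))

lemma t2I_mul_t2I : t2I q * t2I q = 0 := by
  simpa using RingQuot.mkAlgHom_rel ℂ (RelI.rel_th22 (q := q))

lemma t1I_mul_t2I : t1I q * t2I q = -(t2I q * t1I q) := by
  simpa using RingQuot.mkAlgHom_rel ℂ (RelI.rel_th12 (q := q))

lemma t1I_mul_t0I : t1I q * t0I q = -((q ^ 2)⁻¹ • (t0I q * t1I q)) := by
  simpa using RingQuot.mkAlgHom_rel ℂ (RelI.rel_th10 (q := q))

lemma t2I_mul_t0I : t2I q * t0I q = -(q ^ 2 • (t0I q * t2I q)) := by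
  simpa using RingQuot.mkAlgHom_rel ℂ (RelI.rel_th20 (q := q))

lemma aI_mul_dI : aI q * dI q = q • (cI q * bI q) + 1 := by
  have det : aI q * dI q - q • (bI q * cI q) = 1 := by
    simpa using RingQuot.mkAlgHom_rel ℂ (RelI.rel_det (q := q))
  rw [← bI_mul_cI, ← det]
  abel

lemma dI_mul_aI : dI q * aI q = q⁻¹ • (cI q * bI q) + 1 := by
  have comm : aI q * dI q - dI q * aI q = (q - q⁻¹) • (bI q * cI q) := by
    simpa using RingQuot.mkAlgHom_rel ℂ (RelI.rel_adda (q := q))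
  rw [← sub_sub_cancel (aI q * dI q) (dI q * aI q), comm, aI_mul_dI, bI_mul_cI]
  module

end RelationsI

section RelationsII

variable {q : ℂ}

attribute [local simp] mkII aII bII cII dII t0II t1II t2II

lemma aII_mul_bII : aII q * bII q = q • (bII q * aII q) := by
  simpa using RingQuot.mkAlgHom_rel ℂ (RelII.rel_ab (q := q))

lemma aII_mul_cII : aII q * cII q = q • (cII q * aII q) := by
  simpa using RingQuot.mkAlgHom_rel ℂ (RelII.rel_ac (q := q))

lemma bII_mul_cII : bII q * cII q = cII q * bII q := by
  simpa using RingQuot.mkAlgHom_rel ℂ (RelII.rel_bc (q := q))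

lemma bII_mul_dII : bII q * dII q = q • (dII q * bII q) := by
  simpa using RingQuot.mkAlgHom_rel ℂ (RelII.rel_bd (q := q))

lemma cII_mul_dII : cII q * dII q = q • (dII q * cII q) := by
  simpa using RingQuot.mkAlgHom_rel ℂ (RelII.rel_cd (q := q))

lemma t0II_mul_aII : t0II q * aII q = aII q * t0II q := by
  simpa using RingQuot.mkAlgHom_rel ℂ (RelII.rel_t0a (q := q))

lemma t1II_mul_aII : t1II q * aII q = q • (aII q * t1II q) := by
  simpa using RingQuot.mkAlgHom_rel ℂ (RelII.rel_t1a (q := q))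

lemma t2II_mul_aII : t2II q * aII q = q⁻¹ • (aII q * t2II q) := by
  simpa using RingQuot.mkAlgHom_rel ℂ (RelII.rel_t2a (q := q))

lemma t0II_mul_bII : t0II q * bII q = bII q * t0II q := by
  simpa using RingQuot.mkAlgHom_rel ℂ (RelII.rel_t0b (q := q))

lemma t1II_mul_bII : t1II q * bII q = q • (bII q * t1II q) := by
  simpa using RingQuot.mkAlgHom_rel ℂ (RelII.rel_t1b (q := q))

lemma t2II_mul_bII : t2II q * bII q = q⁻¹ • (bII q * t2II q) := by
  simpa using RingQuot.mkAlgHom_rel ℂ (RelII.rel_t2b (q := q))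

lemma t0II_mul_cII : t0II q * cII q = cII q * t0II q + (q - q⁻¹) • (aII q * t2II q) := by
  simpa using RingQuot.mkAlgHom_rel ℂ (RelII.rel_t0c (q := q))

lemma t1II_mul_cII :
    t1II q * cII q =
      q⁻¹ • (cII q * t1II q) - ((q - q⁻¹) * (q + q⁻¹) / q ^ 2) • (aII q * t0II q) := by
  simpa using RingQuot.mkAlgHom_rel ℂ (RelII.rel_t1c (q := q))

lemma t2II_mul_cII : t2II q * cII q = q • (cII q * t2II q) := by
  simpa using RingQuot.mkAlgHom_rel ℂ (RelII.rel_t2c (q := q))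

lemma t0II_mul_dII : t0II q * dII q = dII q * t0II q + (q - q⁻¹) • (bII q * t2II q) := by
  simpa using RingQuot.mkAlgHom_rel ℂ (RelII.rel_t0d (q := q))

lemma t1II_mul_dII :
    t1II q * dII q =
      q⁻¹ • (dII q * t1II q) - ((q - q⁻¹) * (q + q⁻¹) / q ^ 2) • (bII q * t0II q) := by
  simpa using RingQuot.mkAlgHom_rel ℂ (RelII.rel_t1d (q := q))

lemma t2II_mul_dII : t2II q * dII q = q • (dII q * t2II q) := by
  simpa using RingQuot.mkAlgHom_rel ℂ (RelII.rel_t2d (q := q))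

lemma t0II_mul_t0II : t0II q * t0II q = (q ^ 2 * (q - q⁻¹) / (q + q⁻¹)) • (t1II q * t2II q) := by
  simpa using RingQuot.mkAlgHom_rel ℂ (RelII.rel_th00 (q := q))

lemma t1II_mul_t1II : t1II q * t1II q = 0 := by
  simpa using RingQuot.mkAlgHom_rel ℂ (RelII.rel_th11 (q := q))

lemma t2II_mul_t2II : t2II q * t2II q = 0 := by
  simpa using RingQuot.mkAlgHom_rel ℂ (RelII.rel_th22 (q := q))

lemma t1II_mul_t2II : t1II q * t2II q = -(t2II q * t1II q) := by
  simpa using RingQuot.mkAlgHom_rel ℂ (RelII.rel_th12 (q := q))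

lemma t1II_mul_t0II : t1II q * t0II q = -((q ^ 2)⁻¹ • (t0II q * t1II q)) := by
  simpa using RingQuot.mkAlgHom_rel ℂ (RelII.rel_th10 (q := q))

lemma t2II_mul_t0II : t2II q * t0II q = -(q ^ 2 • (t0II q * t2II q)) := by
  simpa using RingQuot.mkAlgHom_rel ℂ (RelII.rel_th20 (q := q))

lemma aII_mul_dII : aII q * dII q = q • (cII q * bII q) + 1 := by
  have det : aII q * dII q - q • (bII q * cII q) = 1 := by
    simpa using RingQuot.mkAlgHom_rel ℂ (RelII.rel_det (q := q))
  rw [← bII_mul_cII, ← det]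
  abel

lemma dII_mul_aII : dII q * aII q = q⁻¹ • (cII q * bII q) + 1 := by
  have comm : aII q * dII q - dII q * aII q = (q - q⁻¹) • (bII q * cII q) := by
    simpa using RingQuot.mkAlgHom_rel ℂ (RelII.rel_adda (q := q))
  rw [← sub_sub_cancel (aII q * dII q) (dII q * aII q), comm, aII_mul_dII, bII_mul_cII]
  module

end RelationsII

section StarMaps

def starGenI (q : ℂ) : Fin 7 → MqII q :=
  ![dII q, -(q • cII q), -(q⁻¹ • bII q), aII q, -t0II q, -t2II q, -t1II q]

def starGenII (q : ℂ) : Fin 7 → MqI q :=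
  ![dI q, -(q • cI q), -(q⁻¹ • bI q), aI q, -t0I q, -t2I q, -t1I q]

def starLiftI (q : ℂ) : F7 →ₐ[ℂ] ConjOpposite ℂ (MqII q) :=
  FreeAlgebra.lift ℂ fun i => ConjOpposite.op (starGenI q i)

def starLiftII (q : ℂ) : F7 →ₐ[ℂ] ConjOpposite ℂ (MqI q) :=
  FreeAlgebra.lift ℂ fun i => ConjOpposite.op (starGenII q i)

variable {q : ℂ}

lemma starLiftI_rel (hq : star q = q) (hq0 : q ≠ 0) ⦃x y : F7⦄ (h : RelI q x y) :
    starLiftI q x = starLiftI q y := by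
  apply ConjOpposite.unop_injective
  cases h <;> simp only [g, starLiftI, starGenI, FreeAlgebra.lift_ι_apply, Matrix.cons_val,
    map_mul, map_smul, map_add, map_sub, map_neg, map_one, map_zero,
    ConjOpposite.unop_op, ConjOpposite.unop_mul, ConjOpposite.unop_smul, ConjOpposite.unop_add,
    ConjOpposite.unop_sub, ConjOpposite.unop_neg, ConjOpposite.unop_one, ConjOpposite.unop_zero,
    star_sub, star_add, star_mul', star_inv₀, star_div₀, star_pow, star_neg, hq,
    RingQuot.neg_eq_neg_one_smul (S := ℂ), RingQuot.sub_eq_add_neg_one_smul (S := ℂ),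
    neg_mul, mul_neg, neg_neg, sub_mul, mul_sub, mul_add, add_mul, mul_one, one_mul,
    smul_mul_assoc, mul_smul_comm, smul_smul, smul_add, smul_zero,
    aII_mul_bII, aII_mul_cII, bII_mul_cII, bII_mul_dII, cII_mul_dII, aII_mul_dII, dII_mul_aII,
    t0II_mul_aII, t1II_mul_aII, t2II_mul_aII, t0II_mul_bII, t1II_mul_bII, t2II_mul_bII,
    t0II_mul_cII, t1II_mul_cII, t2II_mul_cII, t0II_mul_dII, t1II_mul_dII, t2II_mul_dII,
    t0II_mul_t0II, t1II_mul_t1II, t2II_mul_t2II, t1II_mul_t2II, t1II_mul_t0II, t2II_mul_t0II]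
  all_goals match_scalars <;> field_simp <;> ring

lemma starLiftII_rel (hq : star q = q) (hq0 : q ≠ 0) ⦃x y : F7⦄ (h : RelII q x y) :
    starLiftII q x = starLiftII q y := by
  apply ConjOpposite.unop_injective
  cases h <;> simp only [g, starLiftII, starGenII, FreeAlgebra.lift_ι_apply, Matrix.cons_val,
    map_mul, map_smul, map_add, map_sub, map_neg, map_one, map_zero,
    ConjOpposite.unop_op, ConjOpposite.unop_mul, ConjOpposite.unop_smul, ConjOpposite.unop_add,
    ConjOpposite.unop_sub, ConjOpposite.unop_neg, ConjOpposite.unop_one, ConjOpposite.unop_zero,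
    star_sub, star_add, star_mul', star_inv₀, star_div₀, star_pow, star_neg, hq,
    RingQuot.neg_eq_neg_one_smul (S := ℂ), RingQuot.sub_eq_add_neg_one_smul (S := ℂ),
    neg_mul, mul_neg, neg_neg, sub_mul, mul_sub, mul_add, mul_one, one_mul,
    smul_mul_assoc, mul_smul_comm, smul_smul, smul_add, smul_zero,
    aI_mul_bI, aI_mul_cI, bI_mul_cI, bI_mul_dI, cI_mul_dI, aI_mul_dI, dI_mul_aI,
    t0I_mul_aI, t1I_mul_aI, t2I_mul_aI, t0I_mul_bI, t1I_mul_bI, t2I_mul_bI,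
    t0I_mul_cI, t1I_mul_cI, t2I_mul_cI, t0I_mul_dI, t1I_mul_dI, t2I_mul_dI,
    t0I_mul_t0I, t1I_mul_t1I, t2I_mul_t2I, t1I_mul_t2I, t1I_mul_t0I, t2I_mul_t0I]
  all_goals match_scalars <;> field_simp <;> ring

variable (hq : star q = q) (hq0 : q ≠ 0)

def starI : MqI q →ₐ[ℂ] ConjOpposite ℂ (MqII q) :=
  RingQuot.liftAlgHom ℂ ⟨starLiftI q, starLiftI_rel hq hq0⟩

def starII : MqII q →ₐ[ℂ] ConjOpposite ℂ (MqI q) :=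
  RingQuot.liftAlgHom ℂ ⟨starLiftII q, starLiftII_rel hq hq0⟩

lemma unop_starI_mkI_g (i : Fin 7) : (starI hq hq0 (mkI q (g i))).unop = starGenI q i := by
  simp [starI, mkI, starLiftI, g]

lemma unop_starII_mkII_g (i : Fin 7) : (starII hq hq0 (mkII q (g i))).unop = starGenII q i := by
  simp [starII, mkII, starLiftII, g]

lemma comp_starII_starI :
    ConjOpposite.comp (starII hq hq0) (starI hq hq0) = AlgHom.id ℂ (MqI q) := by
  refine RingQuot.ringQuot_ext' ℂ _ _ (FreeAlgebra.hom_ext (funext fun i => ?_))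
  change ConjOpposite.comp _ _ (mkI q (g i)) = mkI q (g i)
  fin_cases i <;> simp only [ConjOpposite.comp_apply, unop_starI_mkI_g, starGenI,
    Matrix.cons_val, Fin.zero_eta, Fin.mk_one, Fin.reduceFinMk,
    aII, bII, cII, dII, t0II, t1II, t2II, RingQuot.neg_eq_neg_one_smul (S := ℂ), smul_smul,
    map_smul, ConjOpposite.unop_smul, unop_starII_mkII_g, starGenII,
    aI, bI, cI, dI, t0I, t1I, t2I]
  all_goals (match_scalars; simp [hq, hq0])

lemma comp_starI_starII :
    ConjOpposite.comp (starI hq hq0) (starII hq hq0) = AlgHom.id ℂ (MqII q) := by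
  refine RingQuot.ringQuot_ext' ℂ _ _ (FreeAlgebra.hom_ext (funext fun i => ?_))
  change ConjOpposite.comp _ _ (mkII q (g i)) = mkII q (g i)
  fin_cases i <;> simp only [ConjOpposite.comp_apply, unop_starII_mkII_g, starGenII,
    Matrix.cons_val, Fin.zero_eta, Fin.mk_one, Fin.reduceFinMk,
    aI, bI, cI, dI, t0I, t1I, t2I, RingQuot.neg_eq_neg_one_smul (S := ℂ), smul_smul,
    map_smul, ConjOpposite.unop_smul, unop_starI_mkI_g, starGenI,
    aII, bII, cII, dII, t0II, t1II, t2II]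
  all_goals (match_scalars; simp [hq, hq0])

end StarMaps

theorem star_involution_swaps_types_general (q : ℝ) (hq0 : q ≠ 0) :
    ∃ (st : MqI (q : ℂ) → MqII (q : ℂ)) (ts : MqII (q : ℂ) → MqI (q : ℂ)),
      (∀ x y, st (x + y) = st x + st y) ∧
      (∀ (z : ℂ) (x), st (z • x) = (starRingEnd ℂ z) • st x) ∧
      (∀ x y, st (x * y) = st y * st x) ∧
      st 1 = 1 ∧
      st (aI (q : ℂ)) = dII (q : ℂ) ∧
      st (bI (q : ℂ)) = -((q : ℂ) • cII (q : ℂ)) ∧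
      st (cI (q : ℂ)) = -((q : ℂ)⁻¹ • bII (q : ℂ)) ∧
      st (dI (q : ℂ)) = aII (q : ℂ) ∧
      st (t0I (q : ℂ)) = -(t0II (q : ℂ)) ∧
      st (t1I (q : ℂ)) = -(t2II (q : ℂ)) ∧
      st (t2I (q : ℂ)) = -(t1II (q : ℂ)) ∧
      (∀ x y, ts (x + y) = ts x + ts y) ∧
      (∀ (z : ℂ) (x), ts (z • x) = (starRingEnd ℂ z) • ts x) ∧
      (∀ x y, ts (x * y) = ts y * ts x) ∧
      ts 1 = 1 ∧
      ts (aII (q : ℂ)) = dI (q : ℂ) ∧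
      ts (bII (q : ℂ)) = -((q : ℂ) • cI (q : ℂ)) ∧
      ts (cII (q : ℂ)) = -((q : ℂ)⁻¹ • bI (q : ℂ)) ∧
      ts (dII (q : ℂ)) = aI (q : ℂ) ∧
      ts (t0II (q : ℂ)) = -(t0I (q : ℂ)) ∧
      ts (t1II (q : ℂ)) = -(t2I (q : ℂ)) ∧
      ts (t2II (q : ℂ)) = -(t1I (q : ℂ)) ∧
      (∀ x, ts (st x) = x) ∧ (∀ y, st (ts y) = y) := by
  have hq : star (q : ℂ) = q := Complex.conj_ofReal q
  have hq0' : (q : ℂ) ≠ 0 := Complex.ofReal_ne_zero.mpr hq0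
  refine ⟨fun x => (starI hq hq0' x).unop, fun y => (starII hq hq0' y).unop,
    fun x y => by simp, fun z x => by simp, fun x y => by simp, by simp,
    unop_starI_mkI_g hq hq0' 0, unop_starI_mkI_g hq hq0' 1, unop_starI_mkI_g hq hq0' 2,
    unop_starI_mkI_g hq hq0' 3, unop_starI_mkI_g hq hq0' 4, unop_starI_mkI_g hq hq0' 5,
    unop_starI_mkI_g hq hq0' 6,
    fun x y => by simp, fun z x => by simp, fun x y => by simp, by simp,
    unop_starII_mkII_g hq hq0' 0, unop_starII_mkII_g hq hq0' 1, unop_starII_mkII_g hq hq0' 2,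
    unop_starII_mkII_g hq hq0' 3, unop_starII_mkII_g hq hq0' 4, unop_starII_mkII_g hq hq0' 5,
    unop_starII_mkII_g hq hq0' 6,
    DFunLike.congr_fun (comp_starII_starI hq hq0'), DFunLike.congr_fun (comp_starI_starII hq hq0')⟩

/-- For real `q ∉ {0, 1, −1}`, the assignments
`a ↦ d`, `b ↦ −qc`, `c ↦ −q⁻¹b`, `d ↦ a`, `θ⁰ ↦ −θ⁰`, `θ¹ ↦ −θ²`, `θ² ↦ −θ¹`
extend to a conjugate-linear anti-homomorphism `* : M_q^I → M_q^II`, the map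
`M_q^II → M_q^I` given by the same assignments is its two-sided inverse, and in particular
`*` is bijective: the `*`-involution interchanges the type-I and type-II quantum
algebras. -/
theorem star_involution_swaps_types (q : ℝ) (hq0 : q ≠ 0) (hq1 : q ≠ 1) (hqm1 : q ≠ -1) :
    ∃ (st : MqI (q : ℂ) → MqII (q : ℂ)) (ts : MqII (q : ℂ) → MqI (q : ℂ)),
      (∀ x y, st (x + y) = st x + st y) ∧
      (∀ (z : ℂ) (x), st (z • x) = (starRingEnd ℂ z) • st x) ∧
      (∀ x y, st (x * y) = st y * st x) ∧
      st 1 = 1 ∧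
      st (aI (q : ℂ)) = dII (q : ℂ) ∧
      st (bI (q : ℂ)) = -((q : ℂ) • cII (q : ℂ)) ∧
      st (cI (q : ℂ)) = -((q : ℂ)⁻¹ • bII (q : ℂ)) ∧
      st (dI (q : ℂ)) = aII (q : ℂ) ∧
      st (t0I (q : ℂ)) = -(t0II (q : ℂ)) ∧
      st (t1I (q : ℂ)) = -(t2II (q : ℂ)) ∧
      st (t2I (q : ℂ)) = -(t1II (q : ℂ)) ∧
      (∀ x y, ts (x + y) = ts x + ts y) ∧
      (∀ (z : ℂ) (x), ts (z • x) = (starRingEnd ℂ z) • ts x) ∧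
      (∀ x y, ts (x * y) = ts y * ts x) ∧
      ts 1 = 1 ∧
      ts (aII (q : ℂ)) = dI (q : ℂ) ∧
      ts (bII (q : ℂ)) = -((q : ℂ) • cI (q : ℂ)) ∧
      ts (cII (q : ℂ)) = -((q : ℂ)⁻¹ • bI (q : ℂ)) ∧
      ts (dII (q : ℂ)) = aI (q : ℂ) ∧
      ts (t0II (q : ℂ)) = -(t0I (q : ℂ)) ∧
      ts (t1II (q : ℂ)) = -(t2I (q : ℂ)) ∧
      ts (t2II (q : ℂ)) = -(t1I (q : ℂ)) ∧
      (∀ x, ts (st x) = x) ∧ (∀ y, st (ts y) = y) :=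
  star_involution_swaps_types_general q hq0
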